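/- arXiv:1310.4533 — 14 statements merged into one kernel-verified Lean document; each statement's English description precedes it below -/
import Mathlib

section
/- Let X be a linearly ordered set and u a non-principal ultrafilter over X. Then the pair (I_u, J_u) is a cut of X: I_u is downward closed, J_u is upward closed, I_u ∩ J_u = ∅ and I_u ∪ J_u = X; moreover exactly one of the two memberships I_u ∈ u, J_u ∈ u holds. -/
/-- The ultrafilter extension of a binary relation `R` on `X`:
`u R̃ v` iff `{x | {y | R x y} ∈ v} ∈ u`. -/
def relExt {X : Type*} (R : X → X → Prop) (u v : Ultrafilter X) : Prop :=
  {x : X | {y : X | R x y} ∈ v} ∈ u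

/-- `I_u`: the intersection of all downward closed sets belonging to `u`. -/
def Iset {X : Type*} [LinearOrder X] (u : Ultrafilter X) : Set X :=
  ⋂₀ {I : Set X | I ∈ u ∧ ∀ ⦃a b : X⦄, a ≤ b → b ∈ I → a ∈ I}

/-- `J_u`: the intersection of all upward closed sets belonging to `u`. -/
def Jset {X : Type*} [LinearOrder X] (u : Ultrafilter X) : Set X :=
  ⋂₀ {J : Set X | J ∈ u ∧ ∀ ⦃a b : X⦄, a ≤ b → a ∈ J → b ∈ J}

/-- The ultrafilter extension of a binary operation `F` on `X`. -/
def opExt {X : Type*} (F : X → X → X) (u v : Ultrafilter X) : Ultrafilter X :=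
  u.bind (fun x => v.map (F x))

lemma mem_Iset_iff {X : Type*} [LinearOrder X] (u : Ultrafilter X) (x : X) :
    x ∈ Iset u ↔ Set.Ici x ∈ u := by
  constructor
  · intro hx
    by_contra h
    have h2 : Set.Iio x ∈ u := by
      have := (Ultrafilter.compl_mem_iff_notMem).2 h
      simpa [Set.compl_Ici] using this
    have := hx (Set.Iio x) ⟨h2, fun a b hab hb => lt_of_le_of_lt hab hb⟩
    exact lt_irrefl x this
  · intro h I hI
    obtain ⟨hIu, hdc⟩ := hI
    obtain ⟨y, hy1, hy2⟩ := u.toFilter.nonempty_of_mem (Filter.inter_mem h hIu)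
    exact hdc hy1 hy2

lemma mem_Jset_iff {X : Type*} [LinearOrder X] (u : Ultrafilter X) (x : X) :
    x ∈ Jset u ↔ Set.Iic x ∈ u := by
  constructor
  · intro hx
    by_contra h
    have h2 : Set.Ioi x ∈ u := by
      have := (Ultrafilter.compl_mem_iff_notMem).2 h
      simpa [Set.compl_Iic] using this
    have := hx (Set.Ioi x) ⟨h2, fun a b hab ha => lt_of_lt_of_le ha hab⟩
    exact lt_irrefl x this
  · intro h J hJ
    obtain ⟨hJu, huc⟩ := hJ
    obtain ⟨y, hy1, hy2⟩ := u.toFilter.nonempty_of_mem (Filter.inter_mem h hJu)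
    exact huc hy1 hy2

/-- For a non-principal ultrafilter `u` over a linearly ordered set, `(I_u, J_u)` is a cut:
`I_u` is downward closed, `J_u` is upward closed, they are disjoint and cover `X`,
and exactly one of `I_u ∈ u`, `J_u ∈ u` holds. -/
theorem stmt0 {X : Type*} [LinearOrder X] (u : Ultrafilter X)
    (hnp : ¬ ∃ x : X, u = pure x) :
    (∀ ⦃a b : X⦄, a ≤ b → b ∈ Iset u → a ∈ Iset u) ∧
    (∀ ⦃a b : X⦄, a ≤ b → a ∈ Jset u → b ∈ Jset u) ∧
    Iset u ∩ Jset u = ∅ ∧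
    Iset u ∪ Jset u = Set.univ ∧
    Xor' (Iset u ∈ u) (Jset u ∈ u) := by
  have hIdc : ∀ ⦃a b : X⦄, a ≤ b → b ∈ Iset u → a ∈ Iset u := by
    intro a b hab hb
    rw [mem_Iset_iff] at hb ⊢
    exact u.toFilter.mem_of_superset hb (Set.Ici_subset_Ici.2 hab)
  have hJuc : ∀ ⦃a b : X⦄, a ≤ b → a ∈ Jset u → b ∈ Jset u := by
    intro a b hab ha
    rw [mem_Jset_iff] at ha ⊢
    exact u.toFilter.mem_of_superset ha (Set.Iic_subset_Iic.2 hab)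
  have hdisj : Iset u ∩ Jset u = ∅ := by
    ext x
    simp only [Set.mem_inter_iff, Set.mem_empty_iff_false, iff_false, not_and]
    intro hI hJ
    rw [mem_Iset_iff] at hI
    rw [mem_Jset_iff] at hJ
    have hs : ({x} : Set X) ∈ u := by
      have := Filter.inter_mem hI hJ
      simpa [Set.Ici_inter_Iic] using this
    obtain ⟨y, hy, hyu⟩ := Ultrafilter.eq_pure_of_finite_mem (Set.finite_singleton x) hs
    exact hnp ⟨y, hyu⟩
  have hcov : Iset u ∪ Jset u = Set.univ := by
    ext x
    simp only [Set.mem_union, Set.mem_univ, iff_true]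
    by_contra h
    push_neg at h
    obtain ⟨hI, hJ⟩ := h
    rw [mem_Iset_iff] at hI
    rw [mem_Jset_iff] at hJ
    have h1 : Set.Iio x ∈ u := by
      have := (Ultrafilter.compl_mem_iff_notMem).2 hI
      simpa [Set.compl_Ici] using this
    have h2 : Set.Ioi x ∈ u := by
      have := (Ultrafilter.compl_mem_iff_notMem).2 hJ
      simpa [Set.compl_Iic] using this
    have := Filter.inter_mem h1 h2
    have hne := u.toFilter.nonempty_of_mem this
    obtain ⟨y, hy1, hy2⟩ := hne
    exact absurd (lt_trans hy1 hy2) (lt_irrefl y)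
  have hcompl : Jset u = (Iset u)ᶜ := by
    ext x
    constructor
    · intro hJ
      intro hI
      have : x ∈ Iset u ∩ Jset u := ⟨hI, hJ⟩
      rw [hdisj] at this
      exact this
    · intro hI
      have : x ∈ Iset u ∪ Jset u := hcov ▸ Set.mem_univ x
      rcases this with h | h
      · exact absurd h hI
      · exact h
  refine ⟨hIdc, hJuc, hdisj, hcov, ?_⟩
  have hiff : Jset u ∈ u ↔ Iset u ∉ u := by
    rw [hcompl]
    exact Ultrafilter.compl_mem_iff_notMem
  by_cases h : Iset u ∈ u
  · exact Or.inl ⟨h, fun hJ => (hiff.1 hJ) h⟩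
  · exact Or.inr ⟨hiff.2 h, h⟩
end

section
/- Let X be a linearly ordered set, u any ultrafilter over X, and v a non-principal ultrafilter over X. Then u <̃ v if and only if I_v ∈ u, and u >̃ v if and only if J_v ∈ u. -/
/-- For any ultrafilter `u` and non-principal `v`:
`u <̃ v ↔ I_v ∈ u` and `u >̃ v ↔ J_v ∈ u`. -/
theorem stmt2 {X : Type*} [LinearOrder X] (u v : Ultrafilter X)
    (hv : ¬ ∃ x : X, v = pure x) :
    (relExt (· < ·) u v ↔ Iset v ∈ u) ∧
    (relExt (· > ·) u v ↔ Jset v ∈ u) := by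
  have hne : ∀ x : X, ({x}ᶜ : Set X) ∈ v := by
    intro x
    rw [Ultrafilter.compl_mem_iff_notMem]
    intro h
    obtain ⟨y, _, hvy⟩ := Ultrafilter.eq_pure_of_finite_mem (Set.finite_singleton x) h
    exact hv ⟨y, hvy⟩
  have hI : Iset v = {x | Set.Ioi x ∈ v} := by
    ext x
    constructor
    · intro hx
      by_contra h
      have h1 : Set.Iic x ∈ v := by
        have := (Ultrafilter.compl_mem_iff_notMem (f := v)).mpr h
        simpa using this
      have h2 : Set.Iio x ∈ v := by
        have h3 : Set.Iic x ∩ {x}ᶜ ∈ v := Filter.inter_mem h1 (hne x)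
        have heq : Set.Iic x ∩ {x}ᶜ = Set.Iio x := by
          ext y
          simp [lt_iff_le_and_ne, Set.mem_Iic, and_comm]
        rwa [heq] at h3
      have := hx (Set.Iio x) ⟨h2, fun a b hab hb => lt_of_le_of_lt hab hb⟩
      exact lt_irrefl x this
    · intro hx I hmem
      by_contra hxI
      obtain ⟨y, hyI, hxy⟩ := Ultrafilter.nonempty_of_mem (Filter.inter_mem hmem.1 hx)
      exact hxI (hmem.2 (le_of_lt hxy) hyI)
  have hJ : Jset v = {x | Set.Iio x ∈ v} := by
    ext x
    constructor
    · intro hx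
      by_contra h
      have h1 : Set.Ici x ∈ v := by
        have := (Ultrafilter.compl_mem_iff_notMem (f := v)).mpr h
        simpa using this
      have h2 : Set.Ioi x ∈ v := by
        have h3 : Set.Ici x ∩ {x}ᶜ ∈ v := Filter.inter_mem h1 (hne x)
        have heq : Set.Ici x ∩ {x}ᶜ = Set.Ioi x := by
          ext y
          simp [lt_iff_le_and_ne, Set.mem_Ici, and_comm, eq_comm]
        rwa [heq] at h3
      have := hx (Set.Ioi x) ⟨h2, fun a b hab ha => lt_of_lt_of_le ha hab⟩
      exact lt_irrefl x this
    · intro hx I hmem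
      by_contra hxI
      obtain ⟨y, hyI, hyx⟩ := Ultrafilter.nonempty_of_mem (Filter.inter_mem hmem.1 hx)
      exact hxI (hmem.2 (le_of_lt hyx) hyI)
  constructor
  · show {x : X | Set.Ioi x ∈ v} ∈ u ↔ Iset v ∈ u
    rw [hI]
  · show {x : X | Set.Iio x ∈ v} ∈ u ↔ Jset v ∈ u
    rw [hJ]
end

section
/- Let X be a linearly ordered set. For all ultrafilters u, v over X: u ≤̃ v if and only if (u <̃ v or there exists x ∈ X with u = v = pure x); and u ≥̃ v if and only if (u >̃ v or there exists x ∈ X with u = v = pure x). Consequently, on non-principal ultrafilters ≤̃ coincides with <̃ and ≥̃ coincides with >̃. -/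
private lemma auxMono {X : Type*} [LinearOrder X] {u v : Ultrafilter X}
    (h : relExt (· < ·) u v) : relExt (· ≤ ·) u v := by
  refine u.sets_of_superset h ?_
  intro x hx
  exact v.sets_of_superset hx (fun y hy => le_of_lt hy)

private lemma auxMono' {X : Type*} [LinearOrder X] {u v : Ultrafilter X}
    (h : relExt (· > ·) u v) : relExt (· ≥ ·) u v := by
  refine u.sets_of_superset h ?_
  intro x hx
  exact v.sets_of_superset hx (fun y hy => le_of_lt hy)

private lemma auxPure {X : Type*} [LinearOrder X] {u v : Ultrafilter X}
    (hA : {x : X | {y : X | x ≤ y} ∈ v} ∈ u) (hB : {x : X | {y : X | y ≤ x} ∈ v} ∈ u) :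
    ∃ x : X, u = pure x ∧ v = pure x := by
  have hAB : {x : X | {y : X | x ≤ y} ∈ v} ∩ {x : X | {y : X | y ≤ x} ∈ v} ∈ u :=
    u.toFilter.inter_sets hA hB
  -- for each x in the intersection, v = pure x
  have key : ∀ x ∈ ({x : X | {y : X | x ≤ y} ∈ v} ∩ {x : X | {y : X | y ≤ x} ∈ v}),
      v = pure x := by
    rintro x ⟨h1, h2⟩
    have : ({y : X | x ≤ y} ∩ {y : X | y ≤ x}) ∈ v := v.toFilter.inter_sets h1 h2
    have hsing : ({y : X | x ≤ y} ∩ {y : X | y ≤ x}) = {x} := by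
      ext y; simp only [Set.mem_inter_iff, Set.mem_setOf_eq, Set.mem_singleton_iff]
      constructor
      · rintro ⟨hy1, hy2⟩; exact le_antisymm hy2 hy1
      · rintro rfl; exact ⟨le_refl _, le_refl _⟩
    rw [hsing] at this
    obtain ⟨x', hx', h'⟩ := Ultrafilter.eq_pure_of_finite_mem (Set.finite_singleton x) this
    simpa [Set.mem_singleton_iff.mp hx'] using h'
  obtain ⟨x, hx⟩ := Ultrafilter.nonempty_of_mem hAB
  refine ⟨x, ?_, key x hx⟩
  -- u = pure x : the intersection set is a subset of {x}
  have hsub : ({x' : X | {y : X | x' ≤ y} ∈ v} ∩ {x' : X | {y : X | y ≤ x'} ∈ v}) ⊆ {x} := by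
    intro x' hx'
    have hv1 := key x hx
    have hv2 := key x' hx'
    have hp : (pure x : Ultrafilter X) = pure x' := hv1 ▸ hv2
    have : x = x' := by
      have := congrArg (fun (w : Ultrafilter X) => ({x} : Set X) ∈ w) hp
      simp [Ultrafilter.mem_pure] at this
      exact this.symm
    simp [Set.mem_singleton_iff, this]
  have hm : ({x} : Set X) ∈ u := u.sets_of_superset hAB hsub
  obtain ⟨x', hx', h'⟩ := Ultrafilter.eq_pure_of_finite_mem (Set.finite_singleton x) hm
  simpa [Set.mem_singleton_iff.mp hx'] using h' 

private lemma auxLe {X : Type*} [LinearOrder X] (u v : Ultrafilter X) :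
    relExt (· ≤ ·) u v ↔ relExt (· < ·) u v ∨ ∃ x : X, u = pure x ∧ v = pure x := by
  constructor
  · intro h
    by_cases hlt : relExt (· < ·) u v
    · exact Or.inl hlt
    · refine Or.inr ?_
      have hc : {x : X | {y : X | x < y} ∈ v} ∉ u := hlt
      have hc' : {x : X | {y : X | x < y} ∈ v}ᶜ ∈ u :=
        (Ultrafilter.compl_mem_iff_notMem).mpr hc
      have hB : {x : X | {y : X | y ≤ x} ∈ v} ∈ u := by
        refine u.sets_of_superset hc' ?_
        intro x hx
        have : {y : X | x < y} ∉ v := hx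
        have : {y : X | x < y}ᶜ ∈ v := (Ultrafilter.compl_mem_iff_notMem).mpr this
        refine v.sets_of_superset this ?_
        intro y hy
        exact le_of_not_gt hy
      exact auxPure h hB
  · rintro (h | ⟨x, rfl, rfl⟩)
    · exact auxMono h
    · have : {y : X | x ≤ y} ∈ (pure x : Ultrafilter X) := le_refl x
      exact this

private lemma auxGe {X : Type*} [LinearOrder X] (u v : Ultrafilter X) :
    relExt (· ≥ ·) u v ↔ relExt (· > ·) u v ∨ ∃ x : X, u = pure x ∧ v = pure x := by
  constructor
  · intro h
    by_cases hlt : relExt (· > ·) u v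
    · exact Or.inl hlt
    · refine Or.inr ?_
      have hc : {x : X | {y : X | y < x} ∈ v} ∉ u := hlt
      have hc' : {x : X | {y : X | y < x} ∈ v}ᶜ ∈ u :=
        (Ultrafilter.compl_mem_iff_notMem).mpr hc
      have hA : {x : X | {y : X | x ≤ y} ∈ v} ∈ u := by
        refine u.sets_of_superset hc' ?_
        intro x hx
        have : {y : X | y < x} ∉ v := hx
        have : {y : X | y < x}ᶜ ∈ v := (Ultrafilter.compl_mem_iff_notMem).mpr this
        refine v.sets_of_superset this ?_
        intro y hy
        exact le_of_not_gt hy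
      exact auxPure hA h
  · rintro (h | ⟨x, rfl, rfl⟩)
    · exact auxMono' h
    · have : {y : X | y ≤ x} ∈ (pure x : Ultrafilter X) := le_refl x
      exact this

/-- `u ≤̃ v` iff `u <̃ v` or `u = v = pure x` for some `x`, and dually; consequently on
non-principal ultrafilters `≤̃` coincides with `<̃` and `≥̃` with `>̃`. -/
theorem stmt3 {X : Type*} [LinearOrder X] :
    (∀ u v : Ultrafilter X,
      (relExt (· ≤ ·) u v ↔ relExt (· < ·) u v ∨ ∃ x : X, u = pure x ∧ v = pure x) ∧
      (relExt (· ≥ ·) u v ↔ relExt (· > ·) u v ∨ ∃ x : X, u = pure x ∧ v = pure x)) ∧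
    (∀ u v : Ultrafilter X, (¬ ∃ x : X, u = pure x) → (¬ ∃ x : X, v = pure x) →
      (relExt (· ≤ ·) u v ↔ relExt (· < ·) u v) ∧
      (relExt (· ≥ ·) u v ↔ relExt (· > ·) u v)) := by
  refine ⟨fun u v => ⟨auxLe u v, auxGe u v⟩, fun u v hu hv => ?_⟩
  constructor
  · rw [auxLe]
    constructor
    · rintro (h | ⟨x, hx, _⟩)
      · exact h
      · exact absurd ⟨x, hx⟩ hu
    · exact Or.inl
  · rw [auxGe]
    constructor
    · rintro (h | ⟨x, hx, _⟩)
      · exact h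
      · exact absurd ⟨x, hx⟩ hu
    · exact Or.inl
end

section
/- Let X be a linearly ordered set and u, v non-principal ultrafilters over X with I_u ∈ u and I_v ∈ v. Then u <̃ v if and only if I_u ⊆ I_v. -/
/-- For non-principal `u, v` with `I_u ∈ u` and `I_v ∈ v`: `u <̃ v ↔ I_u ⊆ I_v`. -/
theorem stmt4 {X : Type*} [LinearOrder X] (u v : Ultrafilter X)
    (hu : ¬ ∃ x : X, u = pure x) (hv : ¬ ∃ x : X, v = pure x)
    (hIu : Iset u ∈ u) (hIv : Iset v ∈ v) :
    relExt (· < ·) u v ↔ Iset u ⊆ Iset v := by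
  constructor
  · intro hA z hz J hJ
    by_contra hzJ
    have hJsub : J ⊆ {y | y < z} := fun y hy => by
      by_contra h
      exact hzJ (hJ.2 (le_of_not_gt h) hy)
    have hv' : {y : X | y < z} ∈ v := v.toFilter.mem_of_superset hJ.1 hJsub
    have hsub : {x : X | {y : X | x < y} ∈ v} ⊆ {x | x < z} := by
      intro x hx
      have hmem : ({y | x < y} ∩ {y | y < z} : Set X) ∈ v :=
        Filter.inter_mem hx hv'
      obtain ⟨y, hy1, hy2⟩ := v.toFilter.nonempty_of_mem hmem
      exact lt_trans hy1 hy2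
    have hu' : {x : X | x < z} ∈ u := u.toFilter.mem_of_superset hA hsub
    have := hz {x | x < z} ⟨hu', fun a b hab hb => lt_of_le_of_lt hab hb⟩
    exact lt_irrefl z this
  · intro hsub
    apply u.toFilter.mem_of_superset hIu
    intro x hx
    show {y : X | x < y} ∈ v
    by_contra h
    have hc : {y : X | y ≤ x} ∈ v := by
      have := (Ultrafilter.compl_mem_iff_notMem).mpr h
      convert this using 1
      ext y; simp [not_lt]
    have hne : ({x}ᶜ : Set X) ∈ v := by
      rw [Ultrafilter.compl_mem_iff_notMem]
      intro hxv
      refine hv ⟨x, Ultrafilter.coe_injective ?_⟩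
      rw [Ultrafilter.coe_pure]
      exact (Filter.NeBot.eq_pure_iff v.neBot).mpr hxv
    have hlt : {y : X | y < x} ∈ v := by
      have := Filter.inter_mem hc hne
      apply v.toFilter.mem_of_superset this
      rintro y ⟨h1, h2⟩
      exact lt_of_le_of_ne h1 (by simpa using h2)
    have hxIv : x ∈ Iset v := hsub hx
    have := hxIv {y | y < x} ⟨hlt, fun a b hab hb => lt_of_le_of_lt hab hb⟩
    exact lt_irrefl x this
end

section
/- Let X be a linearly ordered set and u, v non-principal ultrafilters over X with I_u ∈ u and J_v ∈ v. Then u <̃ v if and only if I_u ∩ J_v = ∅. -/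
/-- For non-principal `u, v` with `I_u ∈ u` and `J_v ∈ v`: `u <̃ v ↔ I_u ∩ J_v = ∅`. -/
theorem stmt5 {X : Type*} [LinearOrder X] (u v : Ultrafilter X)
    (hu : ¬ ∃ x : X, u = pure x) (hv : ¬ ∃ x : X, v = pure x)
    (hIu : Iset u ∈ u) (hJv : Jset v ∈ v) :
    relExt (· < ·) u v ↔ Iset u ∩ Jset v = ∅ := by

  constructor
  · intro h
    rw [Set.eq_empty_iff_forall_notMem]
    rintro z ⟨hzI, hzJ⟩
    -- {y | y < z} is downward closed; it can't be in u since z ∈ I_u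
    have h1 : {y : X | y < z} ∉ u := by
      intro hmem
      exact lt_irrefl z (hzI {y : X | y < z}
        ⟨hmem, fun a b hab hb => lt_of_le_of_lt hab hb⟩)
    have h2 : {y : X | z ≤ y} ∈ u := by
      have := (Ultrafilter.compl_mem_iff_notMem (s := {y : X | y < z})).2 h1
      convert this using 1
      ext y; simp [not_lt]
    have h3 : ({x : X | {y : X | x < y} ∈ v} ∩ {y : X | z ≤ y} : Set X) ∈ u :=
      Filter.inter_mem h h2
    obtain ⟨x, hxA, hzx⟩ := Ultrafilter.nonempty_of_mem h3
    have h4 : {y : X | z < y} ∈ v :=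
      Filter.mem_of_superset hxA (fun y hy => lt_of_le_of_lt hzx hy)
    exact lt_irrefl z (hzJ {y : X | z < y}
      ⟨h4, fun a b hab ha => lt_of_lt_of_le ha hab⟩)
  · intro h
    refine Filter.mem_of_superset hIu (fun x hx => ?_)
    by_contra hno
    have h1 : {y : X | y ≤ x} ∈ v := by
      have := (Ultrafilter.compl_mem_iff_notMem (s := {y : X | x < y})).2 hno
      convert this using 1
      ext y; simp [not_lt]
    obtain ⟨y, hyJ, hyx⟩ := Ultrafilter.nonempty_of_mem (Filter.inter_mem hJv h1)
    have hyI : y ∈ Iset u := fun D hD => hD.2 hyx (hx D hD)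
    exact absurd h (by
      rw [Set.eq_empty_iff_forall_notMem]
      push_neg
      exact ⟨y, hyI, hyJ⟩)
end

section
/- Let X be a linearly ordered set and u, v non-principal ultrafilters over X with J_u ∈ u and I_v ∈ v. Then u <̃ v if and only if J_u ∩ I_v is nonempty. -/
lemma Jset_up {X : Type*} [LinearOrder X] (u : Ultrafilter X) {a b : X}
    (hab : a ≤ b) (ha : a ∈ Jset u) : b ∈ Jset u := by
  intro J hJ
  exact hJ.2 hab (ha J hJ)

lemma le_mem_of_mem_Jset {X : Type*} [LinearOrder X] (u : Ultrafilter X) {z : X}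
    (hz : z ∈ Jset u) : {x | x ≤ z} ∈ u := by
  by_contra h
  have h' : {x : X | x ≤ z}ᶜ ∈ u := (Ultrafilter.compl_mem_iff_notMem).2 h
  have h2 : {x : X | z < x} ∈ u := by
    convert h' using 1
    ext x; simp [not_le]
  have : z ∈ {x : X | z < x} :=
    hz _ ⟨h2, fun a b hab ha => lt_of_lt_of_le ha hab⟩
  exact lt_irrefl z this

lemma lt_mem_of_mem_Iset {X : Type*} [LinearOrder X] (v : Ultrafilter X) {z : X}
    (hv : ¬ ∃ x : X, v = pure x) (hz : z ∈ Iset v) : {y | z < y} ∈ v := by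
  by_contra h
  have h' : {y : X | z < y}ᶜ ∈ v := (Ultrafilter.compl_mem_iff_notMem).2 h
  have h2 : {y : X | y ≤ z} ∈ v := by
    convert h' using 1
    ext y; simp [not_lt]
  have hsing : ({z} : Set X)ᶜ ∈ v := by
    apply (Ultrafilter.compl_mem_iff_notMem).2
    intro hmem
    obtain ⟨a, ha, heq⟩ := Ultrafilter.eq_pure_of_finite_mem (Set.finite_singleton z) hmem
    exact hv ⟨a, heq⟩
  have h3 : {y : X | y < z} ∈ v := by
    have := Filter.inter_mem h2 hsing
    have heq : {y : X | y ≤ z} ∩ ({z} : Set X)ᶜ = {y : X | y < z} := by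
      ext y
      simp [lt_iff_le_and_ne]
    rwa [heq] at this
  have : z ∈ {y : X | y < z} :=
    hz _ ⟨h3, fun a b hab hb => lt_of_le_of_lt hab hb⟩
  exact lt_irrefl z this

/-- For non-principal `u, v` with `J_u ∈ u` and `I_v ∈ v`:
`u <̃ v` iff `J_u ∩ I_v` is nonempty. -/
theorem stmt6 {X : Type*} [LinearOrder X] (u v : Ultrafilter X)
    (hu : ¬ ∃ x : X, u = pure x) (hv : ¬ ∃ x : X, v = pure x)
    (hJu : Jset u ∈ u) (hIv : Iset v ∈ v) :
    relExt (· < ·) u v ↔ (Jset u ∩ Iset v).Nonempty := by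
  constructor
  · intro hA
    have hS : {x : X | {y : X | x < y} ∈ v} ∈ u := hA
    obtain ⟨x, hxJ, hxS⟩ := Ultrafilter.nonempty_of_mem (Filter.inter_mem hJu hS)
    obtain ⟨y, hy1, hy2⟩ := Ultrafilter.nonempty_of_mem (Filter.inter_mem hxS hIv)
    exact ⟨y, Jset_up u (le_of_lt hy1) hxJ, hy2⟩
  · rintro ⟨z, hzJ, hzI⟩
    have hle : {x : X | x ≤ z} ∈ u := le_mem_of_mem_Jset u hzJ
    have hlt : {y : X | z < y} ∈ v := lt_mem_of_mem_Iset v hv hzI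
    refine Filter.mem_of_superset hle ?_
    intro x (hx : x ≤ z)
    exact Filter.mem_of_superset hlt (fun y hy => lt_of_le_of_lt hx hy)
end

section
/- Let X be a linearly ordered set and u, v non-principal ultrafilters over X with J_u ∈ u and J_v ∈ v. Then u <̃ v if and only if J_v is a proper subset of J_u. -/
/-- For non-principal `u, v` with `J_u ∈ u` and `J_v ∈ v`: `u <̃ v ↔ J_v ⊂ J_u`. -/
theorem stmt7 {X : Type*} [LinearOrder X] (u v : Ultrafilter X)
    (hu : ¬ ∃ x : X, u = pure x) (hv : ¬ ∃ x : X, v = pure x)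
    (hJu : Jset u ∈ u) (hJv : Jset v ∈ v) :
    relExt (· < ·) u v ↔ Jset v ⊂ Jset u := by
  have jsub : ∀ (w : Ultrafilter X) (J : Set X), J ∈ w →
      (∀ ⦃a b : X⦄, a ≤ b → a ∈ J → b ∈ J) → Jset w ⊆ J :=
    fun w J hJ hup z hz => hz J ⟨hJ, hup⟩
  have jup : ∀ (w : Ultrafilter X) ⦃a b : X⦄, a ≤ b → a ∈ Jset w → b ∈ Jset w :=
    fun w a b hab ha J hJ => hJ.2 hab (ha J hJ)
  constructor
  · intro hS
    rw [Set.ssubset_def]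
    constructor
    · intro z hz J hJ
      obtain ⟨x, hx1, hx2⟩ := Filter.nonempty_of_mem (Filter.inter_mem hS hJ.1)
      have hxz : x < z := jsub v _ hx1 (fun a b hab ha => lt_of_lt_of_le ha hab) hz
      exact hJ.2 hxz.le hx2
    · intro hcon
      obtain ⟨x, hx1, hx2⟩ := Filter.nonempty_of_mem (Filter.inter_mem hS hJu)
      have : x < x := jsub v _ hx1 (fun a b hab ha => lt_of_lt_of_le ha hab) (hcon hx2)
      exact lt_irrefl x this
  · rintro ⟨hsub, hne⟩
    by_contra hS
    apply hne
    have hC : ({x : X | {y : X | x < y} ∈ v})ᶜ ∈ u := (Ultrafilter.compl_mem_iff_notMem).2 hS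
    have hCup : ∀ ⦃a b : X⦄, a ≤ b →
        a ∈ ({x : X | {y : X | x < y} ∈ v})ᶜ → b ∈ ({x : X | {y : X | x < y} ∈ v})ᶜ := by
      intro a b hab ha hb
      exact ha (Filter.mem_of_superset hb (fun y hy => lt_of_le_of_lt hab hy))
    intro z hz
    have hzC : z ∈ ({x : X | {y : X | x < y} ∈ v})ᶜ := jsub u _ hC hCup hz
    have : {y : X | y ≤ z} ∈ v := by
      have := (Ultrafilter.compl_mem_iff_notMem).2 hzC
      simpa [Set.compl_setOf, not_lt] using this
    obtain ⟨y, hy1, hy2⟩ := Filter.nonempty_of_mem (Filter.inter_mem this hJv)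
    exact jup v hy1 hy2
end

section
/- Let X be a linearly ordered set. For all non-principal ultrafilters u, v over X, exactly one of u <̃ v and u >̃ v holds: (u <̃ v or u >̃ v) and not (u <̃ v and u >̃ v). In particular, for every non-principal u, u <̃ u holds if and only if u >̃ u fails. -/
lemma key_lemma {X : Type*} [LinearOrder X] (v : Ultrafilter X)
    (hv : ¬ ∃ x : X, v = pure x) (u : Ultrafilter X) :
    relExt (· < ·) u v ↔ ¬ relExt (· > ·) u v := by
  have hsing : ∀ x : X, {x} ∉ v := by
    intro x hx
    obtain ⟨a, ha, hfa⟩ := Ultrafilter.eq_pure_of_finite_mem (Set.finite_singleton x) hx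
    exact hv ⟨a, hfa⟩
  have hcompl : {x : X | {y : X | x < y} ∈ v} = {x : X | {y : X | x > y} ∈ v}ᶜ := by
    ext x
    simp only [Set.mem_setOf_eq, Set.mem_compl_iff]
    constructor
    · intro h1 h2
      have h3 : ({y : X | x < y} ∩ {y : X | x > y} : Set X) ∈ v := Filter.inter_mem h1 h2
      have : ({y : X | x < y} ∩ {y : X | x > y} : Set X) = ∅ := by
        ext y; simp only [Set.mem_inter_iff, Set.mem_setOf_eq, Set.mem_empty_iff_false,
          iff_false, not_and]
        intro hy hy'; exact absurd hy' (not_lt.2 hy.le)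
      rw [this] at h3
      exact Ultrafilter.empty_notMem h3
    · intro h2
      have h3 : {y : X | x > y}ᶜ ∈ v := Ultrafilter.compl_mem_iff_notMem.2 h2
      have h4 : ({x} : Set X)ᶜ ∈ v := Ultrafilter.compl_mem_iff_notMem.2 (hsing x)
      refine Filter.mem_of_superset (Filter.inter_mem h3 h4) ?_
      rintro y ⟨hy1, hy2⟩
      simp only [Set.mem_compl_iff, Set.mem_setOf_eq, not_lt, Set.mem_singleton_iff] at hy1 hy2
      exact Set.mem_setOf_eq ▸ lt_of_le_of_ne hy1 (Ne.symm hy2)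
  unfold relExt
  rw [hcompl]
  exact Ultrafilter.compl_mem_iff_notMem

/-- For non-principal `u, v`, exactly one of `u <̃ v` and `u >̃ v` holds;
in particular `u <̃ u` holds iff `u >̃ u` fails. -/
theorem stmt8 {X : Type*} [LinearOrder X] :
    (∀ u v : Ultrafilter X, (¬ ∃ x : X, u = pure x) → (¬ ∃ x : X, v = pure x) →
      (relExt (· < ·) u v ∨ relExt (· > ·) u v) ∧
      ¬ (relExt (· < ·) u v ∧ relExt (· > ·) u v)) ∧
    (∀ u : Ultrafilter X, (¬ ∃ x : X, u = pure x) →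
      (relExt (· < ·) u u ↔ ¬ relExt (· > ·) u u)) := by
  constructor
  · intro u v _ hv
    have h := key_lemma v hv u
    constructor
    · by_cases hg : relExt (· > ·) u v
      · exact Or.inr hg
      · exact Or.inl (h.2 hg)
    · rintro ⟨h1, h2⟩
      exact (h.1 h1) h2
  · intro u hu
    exact key_lemma u hu u
end

section
/- Let X be a linearly ordered set and u, v non-principal ultrafilters over X. Then: (u <̃ v and v <̃ u) holds if and only if (I_u ∈ u, I_v ∈ v and I_u = I_v); and the following are equivalent: (u >̃ v and v >̃ u); (neither u <̃ v nor v <̃ u); (J_u ∈ u, J_v ∈ v and J_u = J_v). -/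
section Aux

variable {X : Type*} [LinearOrder X]

/-- The "strictly below v" set. -/
def Dset (u v : Ultrafilter X) : Set X := {x : X | {y : X | x < y} ∈ v}

lemma dset_down (u v : Ultrafilter X) : ∀ ⦃a b : X⦄, a ≤ b → b ∈ Dset u v → a ∈ Dset u v := by
  intro a b hab hb
  exact Filter.mem_of_superset hb (fun y hy => lt_of_le_of_lt hab hy)

lemma notmem_dset {v u : Ultrafilter X} {x : X} (h : x ∉ Dset v u) : {y : X | y ≤ x} ∈ u := by
  have : {y : X | x < y}ᶜ ∈ u := Ultrafilter.compl_mem_iff_notMem.2 h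
  have he : {y : X | x < y}ᶜ = {y : X | y ≤ x} := by ext y; simp [not_lt]
  rwa [he] at this

lemma dset_subset {u v : Ultrafilter X} (h2 : Dset v u ∈ v) : Dset u v ⊆ Dset v u := by
  intro x hx
  by_contra hxn
  have hle : {y : X | y ≤ x} ∈ u := notmem_dset hxn
  obtain ⟨y, hxy, hyD⟩ := Ultrafilter.nonempty_of_mem (Filter.inter_mem hx h2 :
    ({y : X | x < y} ∩ Dset v u) ∈ v)
  obtain ⟨z, hz1, hz2⟩ := Ultrafilter.nonempty_of_mem (Filter.inter_mem hyD hle :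
    ({z : X | y < z} ∩ {y : X | y ≤ x}) ∈ u)
  exact absurd (lt_trans hxy hz1) (not_lt.2 hz2)

lemma iset_eq_dset {u v : Ultrafilter X} (h1 : Dset u v ∈ u) (h2 : Dset v u ∈ v) :
    Iset u = Dset u v := by
  apply Set.Subset.antisymm
  · exact Set.sInter_subset_of_mem ⟨h1, dset_down u v⟩
  · intro x hx
    intro E hE
    by_contra hxE
    have hEsub : E ⊆ {e : X | e < x} := fun e he => not_le.1 (fun hxe => hxE (hE.2 hxe he))
    obtain ⟨y, hxy, hyD⟩ := Ultrafilter.nonempty_of_mem (Filter.inter_mem hx h2 :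
      ({y : X | x < y} ∩ Dset v u) ∈ v)
    obtain ⟨z, hz1, hz2⟩ := Ultrafilter.nonempty_of_mem (Filter.inter_mem hE.1 hyD :
      (E ∩ {z : X | y < z}) ∈ u)
    exact absurd (lt_trans hxy hz2) (not_lt.2 (le_of_lt (hEsub hz1)))

lemma nonprin_compl_singleton {v : Ultrafilter X} (hv : ¬ ∃ x : X, v = pure x) (x : X) :
    ({x}ᶜ : Set X) ∈ v := by
  apply Ultrafilter.compl_mem_iff_notMem.2
  intro h
  obtain ⟨y, _, hy⟩ := Ultrafilter.eq_pure_of_finite_mem (Set.finite_singleton x) h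
  exact hv ⟨y, hy⟩

/-- Main lemma, first statement, for an arbitrary linear order. -/
lemma claim1 {Y : Type*} [LinearOrder Y] (u v : Ultrafilter Y)
    (hu : ¬ ∃ x : Y, u = pure x) (hv : ¬ ∃ x : Y, v = pure x) :
    (relExt (· < ·) u v ∧ relExt (· < ·) v u) ↔
      (Iset u ∈ u ∧ Iset v ∈ v ∧ Iset u = Iset v) := by
  constructor
  · rintro ⟨h1, h2⟩
    have h1' : Dset u v ∈ u := h1
    have h2' : Dset v u ∈ v := h2
    have e1 : Iset u = Dset u v := iset_eq_dset h1' h2'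
    have e2 : Iset v = Dset v u := iset_eq_dset h2' h1'
    refine ⟨e1 ▸ h1', e2 ▸ h2', ?_⟩
    rw [e1, e2]
    exact Set.Subset.antisymm (dset_subset h2') (dset_subset h1')
  · rintro ⟨hIu, hIv, heq⟩
    have key : ∀ (w w' : Ultrafilter Y), (¬ ∃ x : Y, w' = pure x) → Iset w ∈ w →
        Iset w = Iset w' → relExt (· < ·) w w' := by
      intro w w' hw' hIw heq'
      have hsub : Iset w ⊆ Dset w w' := by
        intro x hx
        by_contra hxn
        have hle : {y : Y | y ≤ x} ∈ w' := notmem_dset hxn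
        have hlt : {y : Y | y < x} ∈ w' := by
          have := Filter.inter_mem hle (nonprin_compl_singleton hw' x :
            ({x}ᶜ : Set Y) ∈ (w' : Filter Y))
          have he : {y : Y | y ≤ x} ∩ ({x}ᶜ : Set Y) = {y : Y | y < x} := by
            ext y; simp [lt_iff_le_and_ne]
          rwa [he] at this
        have hxIw' : x ∈ Iset w' := heq' ▸ hx
        have : x ∈ {y : Y | y < x} :=
          hxIw' _ ⟨hlt, fun a b hab hb => lt_of_le_of_lt hab hb⟩
        exact lt_irrefl x this
      exact Filter.mem_of_superset hIw hsub
    exact ⟨key u v hv hIu heq, key v u hu hIv heq.symm⟩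

/-- Second statement componentwise. -/
lemma claim2 {Y : Type*} [LinearOrder Y] (u v : Ultrafilter Y)
    (hv : ¬ ∃ x : Y, v = pure x) :
    relExt (· > ·) u v ↔ ¬ relExt (· < ·) u v := by
  constructor
  · intro hg hl
    obtain ⟨x, hx1, hx2⟩ := Ultrafilter.nonempty_of_mem (Filter.inter_mem hg hl :
      ({x : Y | {y : Y | x > y} ∈ v} ∩ {x : Y | {y : Y | x < y} ∈ v}) ∈ u)
    obtain ⟨y, hy1, hy2⟩ := Ultrafilter.nonempty_of_mem (Filter.inter_mem hx1 hx2 :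
      ({y : Y | x > y} ∩ {y : Y | x < y}) ∈ v)
    exact lt_asymm hy1 hy2
  · intro hnl
    by_contra hng
    have hA : {x : Y | {y : Y | y ≤ x} ∈ v} ∈ u := by
      have : {x : Y | {y : Y | x < y} ∈ v}ᶜ ∈ u := Ultrafilter.compl_mem_iff_notMem.2 hnl
      refine Filter.mem_of_superset this (fun x hx => ?_)
      exact notmem_dset (v := u) hx
    have hC : {x : Y | {y : Y | x ≤ y} ∈ v} ∈ u := by
      have : {x : Y | {y : Y | x > y} ∈ v}ᶜ ∈ u := Ultrafilter.compl_mem_iff_notMem.2 hng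
      refine Filter.mem_of_superset this (fun x hx => ?_)
      have : {y : Y | x > y}ᶜ ∈ v := Ultrafilter.compl_mem_iff_notMem.2 hx
      have he : {y : Y | x > y}ᶜ = {y : Y | x ≤ y} := by ext y; simp [not_lt]
      rwa [he] at this
    obtain ⟨x, hx1, hx2⟩ := Ultrafilter.nonempty_of_mem (Filter.inter_mem hA hC :
      ({x : Y | {y : Y | y ≤ x} ∈ v} ∩ {x : Y | {y : Y | x ≤ y} ∈ v}) ∈ u)
    have hsing : ({x} : Set Y) ∈ v := by
      have := Filter.inter_mem hx1 hx2
      have he : {y : Y | y ≤ x} ∩ {y : Y | x ≤ y} = ({x} : Set Y) := by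
        ext y; simp only [Set.mem_inter_iff, Set.mem_setOf_eq, Set.mem_singleton_iff]
        constructor
        · rintro ⟨h1, h2⟩; exact le_antisymm h1 h2
        · rintro rfl; exact ⟨le_refl _, le_refl _⟩
      rwa [he] at this
    obtain ⟨y, _, hy⟩ := Ultrafilter.eq_pure_of_finite_mem (Set.finite_singleton x) hsing
    exact hv ⟨y, hy⟩

/-- Bridge : `Jset` is `Iset` for the dual order. -/
lemma jset_eq_dual (u : Ultrafilter X) :
    Jset u = Iset (X := Xᵒᵈ) u := by
  have h : {J : Set X | J ∈ u ∧ ∀ ⦃a b : X⦄, a ≤ b → a ∈ J → b ∈ J} =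
      {I : Set Xᵒᵈ | I ∈ (u : Ultrafilter Xᵒᵈ) ∧ ∀ ⦃a b : Xᵒᵈ⦄, a ≤ b → b ∈ I → a ∈ I} := by
    ext I
    constructor
    · rintro ⟨h1, h2⟩
      exact ⟨h1, fun a b hab hb => h2 hab hb⟩
    · rintro ⟨h1, h2⟩
      exact ⟨h1, fun a b hab ha => h2 hab ha⟩
  unfold Jset Iset
  exact congrArg Set.sInter h

lemma gtExt_eq_dual (u v : Ultrafilter X) :
    relExt (· > ·) u v = relExt (X := Xᵒᵈ) (· < ·) u v := rfl

end Aux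

/-- Non-antisymmetry and non-connectedness points of the extensions. -/
theorem stmt9 {X : Type*} [LinearOrder X] (u v : Ultrafilter X)
    (hu : ¬ ∃ x : X, u = pure x) (hv : ¬ ∃ x : X, v = pure x) :
    ((relExt (· < ·) u v ∧ relExt (· < ·) v u) ↔
      (Iset u ∈ u ∧ Iset v ∈ v ∧ Iset u = Iset v)) ∧
    ((relExt (· > ·) u v ∧ relExt (· > ·) v u) ↔
      (¬ relExt (· < ·) u v ∧ ¬ relExt (· < ·) v u)) ∧
    ((relExt (· > ·) u v ∧ relExt (· > ·) v u) ↔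
      (Jset u ∈ u ∧ Jset v ∈ v ∧ Jset u = Jset v)) := by
  refine ⟨claim1 u v hu hv, ?_, ?_⟩
  · constructor
    · rintro ⟨h1, h2⟩
      exact ⟨(claim2 u v hv).1 h1, (claim2 v u hu).1 h2⟩
    · rintro ⟨h1, h2⟩
      exact ⟨(claim2 u v hv).2 h1, (claim2 v u hu).2 h2⟩
  · have hd := claim1 (Y := Xᵒᵈ) u v hu hv
    rw [gtExt_eq_dual u v, gtExt_eq_dual v u, jset_eq_dual u, jset_eq_dual v]
    exact hd
end

section
/- Let X be a linearly ordered set. Each of the relations <̃, ≤̃, >̃, ≥̃ on the set of ultrafilters over X is transitive. -/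
lemma relExt_trans_of_trans {X : Type*} {R : X → X → Prop} (h : Transitive R) :
    Transitive (relExt R) := by
  intro u v w huv hvw
  unfold relExt at *
  filter_upwards [huv] with x hx
  have hmem : ({y | R x y} ∩ {y | {z | R y z} ∈ w}) ∈ v :=
    Filter.inter_mem hx hvw
  obtain ⟨y, hxy, hy⟩ := Filter.nonempty_of_mem hmem
  exact Filter.mem_of_superset hy fun z hz => h hxy hz

/-- Each of the relations `<̃, ≤̃, >̃, ≥̃` is transitive. -/
theorem stmt10 {X : Type*} [LinearOrder X] :
    Transitive (relExt ((· < ·) : X → X → Prop)) ∧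
    Transitive (relExt ((· ≤ ·) : X → X → Prop)) ∧
    Transitive (relExt ((· > ·) : X → X → Prop)) ∧
    Transitive (relExt ((· ≥ ·) : X → X → Prop)) := by
  refine ⟨relExt_trans_of_trans ?_, relExt_trans_of_trans ?_,
    relExt_trans_of_trans ?_, relExt_trans_of_trans ?_⟩ <;>
    intro a b c hab hbc
  · exact lt_trans hab hbc
  · exact le_trans hab hbc
  · exact lt_trans hbc hab
  · exact le_trans hbc hab
end

section
/- Let X be a linearly ordered set. The relation ⊴ on ultrafilters over X, defined by u ⊴ v iff (u ≤̃ v or v ≥̃ u), is reflexive, transitive and total (a linear pre-order); consequently the relation ≡, defined by u ≡ v iff (u ⊴ v and v ⊴ u), is an equivalence relation. -/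
section helpers
variable {X : Type*} [LinearOrder X]

/-- auxiliary preorder: every upward closed set in `u` is in `v`. -/
def Sle (u v : Ultrafilter X) : Prop :=
  ∀ J : Set X, (∀ ⦃a b : X⦄, a ≤ b → a ∈ J → b ∈ J) → J ∈ u → J ∈ v

lemma Sle.down {u v : Ultrafilter X} (h : Sle u v) (I : Set X)
    (hI : ∀ ⦃a b : X⦄, a ≤ b → b ∈ I → a ∈ I) (hIv : I ∈ v) : I ∈ u := by
  by_contra hIu
  have hc : Iᶜ ∈ u := Ultrafilter.compl_mem_iff_notMem.mpr hIu
  have : Iᶜ ∈ v := h Iᶜ (fun a b hab ha hb => ha (hI hab hb)) hc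
  exact (Ultrafilter.compl_mem_iff_notMem.mp this) hIv

lemma rel_iff_Sle (u v : Ultrafilter X) :
    (relExt (· ≤ ·) u v ∨ relExt (· ≥ ·) v u) ↔ Sle u v := by
  constructor
  · rintro (h | h) J hJ hJu
    · obtain ⟨x, hxJ, hx⟩ := Filter.nonempty_of_mem (Filter.inter_mem hJu h)
      exact Filter.mem_of_superset hx (fun y hy => hJ hy hxJ)
    · -- relExt ≥ v u : {x | {y | y ≤ x} ∈ u} ∈ v
      by_contra hJv
      have hc : Jᶜ ∈ v := Ultrafilter.compl_mem_iff_notMem.mpr hJv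
      obtain ⟨x, hxJ, hx⟩ := Filter.nonempty_of_mem (Filter.inter_mem hc h)
      obtain ⟨y, hyJ, hy⟩ := Filter.nonempty_of_mem (Filter.inter_mem hJu hx)
      exact hxJ (hJ hy hyJ)
  · intro h
    by_contra hcon
    push_neg at hcon
    obtain ⟨h1, h2⟩ := hcon
    have hD : {x : X | Set.Ici x ∈ v}ᶜ ∈ u := Ultrafilter.compl_mem_iff_notMem.mpr h1
    have hDup : ∀ ⦃a b : X⦄, a ≤ b → a ∈ {x : X | Set.Ici x ∈ v}ᶜ →
        b ∈ {x : X | Set.Ici x ∈ v}ᶜ := by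
      intro a b hab ha hb
      exact ha (Filter.mem_of_superset hb (Set.Ici_subset_Ici.mpr hab))
    have hDv : {x : X | Set.Ici x ∈ v}ᶜ ∈ v := h _ hDup hD
    have hE : {x : X | Set.Iic x ∈ u}ᶜ ∈ v := Ultrafilter.compl_mem_iff_notMem.mpr h2
    obtain ⟨x, hx1, hx2⟩ := Filter.nonempty_of_mem (Filter.inter_mem hDv hE)
    have hIio : Set.Iio x ∈ v := by
      have := Ultrafilter.compl_mem_iff_notMem.mpr hx1
      rwa [Set.compl_Ici] at this
    have hIioU : Set.Iio x ∈ u :=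
      h.down _ (fun a b hab hb => lt_of_le_of_lt hab hb) hIio
    have hIoi : Set.Ioi x ∈ u := by
      have : Set.Iic x ∉ u := hx2
      have := Ultrafilter.compl_mem_iff_notMem.mpr this
      rwa [Set.compl_Iic] at this
    obtain ⟨y, hy1, hy2⟩ := Filter.nonempty_of_mem (Filter.inter_mem hIioU hIoi)
    exact absurd hy1 (not_lt.mpr (le_of_lt hy2))

lemma Sle_refl (u : Ultrafilter X) : Sle u u := fun _ _ h => h

lemma Sle_trans {u v w : Ultrafilter X} (h1 : Sle u v) (h2 : Sle v w) : Sle u w :=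
  fun J hJ hJu => h2 J hJ (h1 J hJ hJu)

lemma Sle_total (u v : Ultrafilter X) : Sle u v ∨ Sle v u := by
  by_cases h : Sle u v
  · exact Or.inl h
  · right
    unfold Sle at h
    push_neg at h
    obtain ⟨J, hJup, hJu, hJv⟩ := h
    intro K hKup hKv
    by_contra hKu
    have hKc : Kᶜ ∈ u := Ultrafilter.compl_mem_iff_notMem.mpr hKu
    have hJc : Jᶜ ∈ v := Ultrafilter.compl_mem_iff_notMem.mpr hJv
    obtain ⟨a, haJ, haK⟩ := Filter.nonempty_of_mem (Filter.inter_mem hJu hKc)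
    obtain ⟨b, hbK, hbJ⟩ := Filter.nonempty_of_mem (Filter.inter_mem hKv hJc)
    rcases le_total a b with hab | hba
    · exact hbJ (hJup hab haJ)
    · exact haK (hKup hba hbK)

end helpers



/-- The relation `u ⊴ v ↔ (u ≤̃ v ∨ v ≥̃ u)` is a linear pre-order, and the induced
relation `≡` is an equivalence. -/
theorem stmt11 {X : Type*} [LinearOrder X] :
    Reflexive (fun u v : Ultrafilter X => relExt (· ≤ ·) u v ∨ relExt (· ≥ ·) v u) ∧
    Transitive (fun u v : Ultrafilter X => relExt (· ≤ ·) u v ∨ relExt (· ≥ ·) v u) ∧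
    (∀ u v : Ultrafilter X,
      (relExt (· ≤ ·) u v ∨ relExt (· ≥ ·) v u) ∨
      (relExt (· ≤ ·) v u ∨ relExt (· ≥ ·) u v)) ∧
    Equivalence (fun u v : Ultrafilter X =>
      (relExt (· ≤ ·) u v ∨ relExt (· ≥ ·) v u) ∧
      (relExt (· ≤ ·) v u ∨ relExt (· ≥ ·) u v)) := by

  have refl : Reflexive (fun u v : Ultrafilter X => relExt (· ≤ ·) u v ∨ relExt (· ≥ ·) v u) :=
    fun u => (rel_iff_Sle u u).mpr (Sle_refl u)
  have trans : Transitive (fun u v : Ultrafilter X => relExt (· ≤ ·) u v ∨ relExt (· ≥ ·) v u) :=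
    fun u v w h1 h2 => (rel_iff_Sle u w).mpr
      (Sle_trans ((rel_iff_Sle u v).mp h1) ((rel_iff_Sle v w).mp h2))
  have tot : ∀ u v : Ultrafilter X,
      (relExt (· ≤ ·) u v ∨ relExt (· ≥ ·) v u) ∨
      (relExt (· ≤ ·) v u ∨ relExt (· ≥ ·) u v) := by
    intro u v
    rcases Sle_total u v with h | h
    · exact Or.inl ((rel_iff_Sle u v).mpr h)
    · exact Or.inr ((rel_iff_Sle v u).mpr h)
  refine ⟨refl, trans, tot, ⟨fun u => ⟨refl u, refl u⟩, fun h => ⟨h.2, h.1⟩,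
    fun h1 h2 => ⟨trans h1.1 h2.1, trans h2.2 h1.2⟩⟩⟩
end

section
/- Let X be a set with a linear order < that is well-founded (a well-order). Then: (a) every non-principal ultrafilter u over X satisfies I_u ∈ u; (b) ≤̃ coincides with ⊴, i.e. for all ultrafilters u, v, u ≤̃ v iff u ⊴ v; (c) ≤̃ is a pre-well-order: it is reflexive, transitive, total, and every nonempty set S of ultrafilters over X contains an element m such that m ≤̃ u for all u ∈ S. -/
/-!
Everything is governed by the upper set `B u = {x | Iio x ∈ u}` of strict upper bounds of an
ultrafilter `u`. In any linear order `u ≤̃ v` means `(B v)ᶜ ∈ u`, which forces `B v ⊆ B u`.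
In a well-order `B u` is empty or of the form `Ici m` with `Iio m ∈ u`, so `(B u)ᶜ ∈ u`, and then
`B v ⊆ B u` gives back `u ≤̃ v`. Hence `u ≤̃ v ↔ B v ⊆ B u`, and the pre-well-order properties
are those of reverse inclusion between upper sets of a well-order. Every downward closed set in
`u` contains `(B u)ᶜ`, so `I_u ∈ u` as well.
-/

namespace Ultrafilter

variable {X : Type*} [LinearOrder X]

def strictUpperBounds (u : Ultrafilter X) : Set X :=
  {x | Set.Iio x ∈ u}

theorem isUpperSet_strictUpperBounds (u : Ultrafilter X) : IsUpperSet u.strictUpperBounds :=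
  fun _ _ hxy hx => Filter.mem_of_superset hx (Set.Iio_subset_Iio hxy)

theorem Iio_mem_of_isLowerSet {u : Ultrafilter X} {I : Set X} (hI : IsLowerSet I) (hIu : I ∈ u)
    {x : X} (hx : x ∉ I) : Set.Iio x ∈ u :=
  Filter.mem_of_superset hIu fun _ hy => lt_of_not_ge fun hxy => hx (hI hxy hy)

theorem compl_strictUpperBounds_subset_Iset (u : Ultrafilter X) :
    u.strictUpperBounds ᶜ ⊆ Iset u := by
  rintro x hx I ⟨hIu, hI⟩
  by_contra hxI
  exact hx (Iio_mem_of_isLowerSet (fun _ _ hba ha => hI hba ha) hIu hxI)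

theorem relExt_le_iff_compl_mem (u v : Ultrafilter X) :
    relExt (· ≤ ·) u v ↔ v.strictUpperBounds ᶜ ∈ u := by
  have hIci : ∀ x : X, {y | x ≤ y} ∈ v ↔ x ∈ v.strictUpperBounds ᶜ := fun x => by
    change Set.Ici x ∈ v ↔ _
    rw [← Set.compl_Iio, compl_mem_iff_notMem]; rfl
  simp only [relExt, hIci, Set.ofPred_mem_eq]

theorem strictUpperBounds_subset_of_relExt_le {u v : Ultrafilter X}
    (h : relExt (· ≤ ·) u v) : v.strictUpperBounds ⊆ u.strictUpperBounds := fun _ hx =>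
  Filter.mem_of_superset ((relExt_le_iff_compl_mem u v).1 h) fun _ hy =>
    lt_of_not_ge fun hxy => hy (v.isUpperSet_strictUpperBounds hxy hx)

theorem strictUpperBounds_subset_of_relExt_ge {u v : Ultrafilter X}
    (h : relExt (· ≥ ·) v u) : v.strictUpperBounds ⊆ u.strictUpperBounds := fun _ hx => by
  obtain ⟨y, hyu, hyx⟩ := Ultrafilter.nonempty_of_mem (Filter.inter_mem h hx)
  exact Filter.mem_of_superset hyu fun _ hz => lt_of_le_of_lt hz hyx

section WellFounded

variable [WellFoundedLT X]

theorem compl_strictUpperBounds_mem (u : Ultrafilter X) : u.strictUpperBounds ᶜ ∈ u := by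
  rcases u.strictUpperBounds.eq_empty_or_nonempty with hempty | hne
  · simp only [hempty, Set.compl_empty]
    exact Filter.univ_mem
  · obtain ⟨m, hm, hmin⟩ := wellFounded_lt.has_min _ hne
    exact Filter.mem_of_superset hm fun _ hx hxB => hmin _ hxB hx

theorem relExt_le_iff_strictUpperBounds_subset (u v : Ultrafilter X) :
    relExt (· ≤ ·) u v ↔ v.strictUpperBounds ⊆ u.strictUpperBounds :=
  ⟨strictUpperBounds_subset_of_relExt_le, fun h => (relExt_le_iff_compl_mem u v).2 <|
    Filter.mem_of_superset (compl_strictUpperBounds_mem u) (Set.compl_subset_compl.2 h)⟩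

theorem exists_forall_strictUpperBounds_subset {S : Set (Ultrafilter X)} (hS : S.Nonempty) :
    ∃ m ∈ S, ∀ u ∈ S, u.strictUpperBounds ⊆ m.strictUpperBounds := by
  rcases (⋃ u ∈ S, u.strictUpperBounds).eq_empty_or_nonempty with hempty | hne
  · obtain ⟨m, hm⟩ := hS
    refine ⟨m, hm, fun u hu x hx => ?_⟩
    simpa [hempty] using Set.mem_biUnion hu hx
  · obtain ⟨x₀, hx₀, hmin⟩ := wellFounded_lt.has_min _ hne
    obtain ⟨m, hm, hx₀m⟩ := Set.mem_iUnion₂.1 hx₀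
    refine ⟨m, hm, fun u hu x hx => ?_⟩
    exact m.isUpperSet_strictUpperBounds
      (le_of_not_gt (hmin x (Set.mem_biUnion hu hx))) hx₀m

end WellFounded

end Ultrafilter

open Ultrafilter in
/-- For a well-ordered set: every non-principal ultrafilter has `I_u ∈ u`,
`≤̃` coincides with `⊴`, and `≤̃` is a pre-well-order. -/
theorem stmt13 {X : Type*} [LinearOrder X]
    (hwf : WellFounded ((· < ·) : X → X → Prop)) :
    (∀ u : Ultrafilter X, (¬ ∃ x : X, u = pure x) → Iset u ∈ u) ∧
    (∀ u v : Ultrafilter X,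
      relExt (· ≤ ·) u v ↔ (relExt (· ≤ ·) u v ∨ relExt (· ≥ ·) v u)) ∧
    Reflexive (relExt ((· ≤ ·) : X → X → Prop)) ∧
    Transitive (relExt ((· ≤ ·) : X → X → Prop)) ∧
    (∀ u v : Ultrafilter X, relExt (· ≤ ·) u v ∨ relExt (· ≤ ·) v u) ∧
    (∀ S : Set (Ultrafilter X), S.Nonempty →
      ∃ m ∈ S, ∀ u ∈ S, relExt (· ≤ ·) m u) := by
  have : WellFoundedLT X := ⟨hwf⟩
  have hB := relExt_le_iff_strictUpperBounds_subset (X := X)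
  refine ⟨fun u _ => Filter.mem_of_superset (compl_strictUpperBounds_mem u)
      (compl_strictUpperBounds_subset_Iset u),
    fun u v => ⟨Or.inl, fun h => h.elim id ((hB u v).2 ∘ strictUpperBounds_subset_of_relExt_ge)⟩,
    fun u => (hB u u).2 subset_rfl,
    fun u v w huv hvw => (hB u w).2 (((hB v w).1 hvw).trans ((hB u v).1 huv)),
    fun u v => ((isUpperSet_strictUpperBounds v).total (isUpperSet_strictUpperBounds u)).imp
      (hB u v).2 (hB v u).2,
    fun S hS => (exists_forall_strictUpperBounds_subset hS).imp fun m ⟨hm, hmin⟩ =>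
      ⟨hm, fun u hu => (hB m u).2 (hmin u hu)⟩⟩
end

section
/- Let X be a linearly ordered set. For all ultrafilters u, v over X, the following equivalences hold: m̃(u,v) = u iff M̃(u,v) = v iff (u ≤̃ v or u = v); and m̃(u,v) = v iff M̃(u,v) = u iff (u ≥̃ v or u = v). -/
lemma mem_opExt {X : Type*} {F : X → X → X} {u v : Ultrafilter X} {S : Set X} :
    S ∈ opExt F u v ↔ {x | {y | F x y ∈ S} ∈ v} ∈ u := by
  change S ∈ Filter.bind _ _ ↔ _
  rw [Filter.mem_bind']
  rfl

lemma opExt_eq_left_of_ev {X : Type*} {u v : Ultrafilter X} {F : X → X → X} {r : X → X → Prop}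
    (hF : ∀ x y, r x y → F x y = x)
    (h : ∀ᶠ x in (u : Filter X), ∀ᶠ y in (v : Filter X), r x y) : opExt F u v = u := by
  ext S
  rw [mem_opExt]
  have key : ∀ᶠ x in (u : Filter X), ({y | F x y ∈ S} ∈ v ↔ x ∈ S) := by
    filter_upwards [h] with x hx
    constructor
    · intro hm
      obtain ⟨y, hy1, hy2⟩ := (hx.and hm).exists
      rwa [hF x y hy1] at hy2
    · intro hxS
      filter_upwards [hx] with y hy
      rw [hF x y hy]; exact hxS
  exact Filter.eventually_congr key

lemma opExt_eq_right_of_ev {X : Type*} {u v : Ultrafilter X} {F : X → X → X} {r : X → X → Prop}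
    (hF : ∀ x y, r x y → F x y = y)
    (h : ∀ᶠ x in (u : Filter X), ∀ᶠ y in (v : Filter X), r x y) : opExt F u v = v := by
  ext S
  rw [mem_opExt]
  have key : ∀ᶠ x in (u : Filter X), ({y | F x y ∈ S} ∈ v ↔ S ∈ v) := by
    filter_upwards [h] with x hx
    have hc : ∀ᶠ y in (v : Filter X), (F x y ∈ S ↔ y ∈ S) := by
      filter_upwards [hx] with y hy
      rw [hF x y hy]
    exact ⟨fun hm => (Filter.eventually_congr hc).mp hm,
           fun hm => (Filter.eventually_congr hc).mpr hm⟩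
  constructor
  · intro hm
    obtain ⟨x, hx⟩ := (key.and hm).exists
    exact hx.1.mp hx.2
  · intro hm
    filter_upwards [key] with x hx
    exact hx.mpr hm

lemma eq_of_le_ge {X : Type*} [LinearOrder X] {u v : Ultrafilter X}
    (h1 : ∀ᶠ x in (u : Filter X), ∀ᶠ y in (v : Filter X), x ≤ y)
    (h2 : ∀ᶠ x in (u : Filter X), ∀ᶠ y in (v : Filter X), y ≤ x) : u = v := by
  have h : ∀ᶠ x in (u : Filter X), ({x} : Set X) ∈ v := by
    filter_upwards [h1, h2] with x hx1 hx2
    have : ∀ᶠ y in (v : Filter X), y ∈ ({x} : Set X) := by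
      filter_upwards [hx1, hx2] with y hy1 hy2
      exact le_antisymm hy2 hy1
    exact this
  obtain ⟨x₀, hx₀⟩ := h.exists
  obtain ⟨x₁, hx₁, hv⟩ := Ultrafilter.eq_pure_of_finite_mem (Set.finite_singleton x₀) hx₀
  have hu : ({x₁} : Set X) ∈ u := by
    filter_upwards [h] with x hx
    rw [hv, Ultrafilter.mem_pure] at hx
    exact Set.mem_singleton_iff.mpr hx.symm
  obtain ⟨x₂, hx₂, hu'⟩ := Ultrafilter.eq_pure_of_finite_mem (Set.finite_singleton x₁) hu
  rw [Set.mem_singleton_iff] at hx₂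
  rw [hu', hv, hx₂]

/-- `m̃(u,v) = u ↔ M̃(u,v) = v ↔ (u ≤̃ v ∨ u = v)`, and
`m̃(u,v) = v ↔ M̃(u,v) = u ↔ (u ≥̃ v ∨ u = v)`. -/
theorem stmt14 {X : Type*} [LinearOrder X] (u v : Ultrafilter X) :
    ((opExt min u v = u ↔ opExt max u v = v) ∧
     (opExt min u v = u ↔ (relExt (· ≤ ·) u v ∨ u = v))) ∧
    ((opExt min u v = v ↔ opExt max u v = u) ∧
     (opExt min u v = v ↔ (relExt (· ≥ ·) u v ∨ u = v))) := by
  rcases u.mem_or_compl_mem {x | {y | x ≤ y} ∈ v} with hA | hAc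
  · -- Case 1: u ≤̃ v
    have hA' : ∀ᶠ x in (u : Filter X), ∀ᶠ y in (v : Filter X), x ≤ y := hA
    have hmin : opExt min u v = u :=
      opExt_eq_left_of_ev (fun x y h => min_eq_left h) hA'
    have hmax : opExt max u v = v :=
      opExt_eq_right_of_ev (fun x y h => max_eq_right h) hA'
    refine ⟨⟨by simp [hmin, hmax], ⟨fun _ => Or.inl hA, fun _ => hmin⟩⟩, ?_, ?_⟩
    · rw [hmin, hmax]; exact eq_comm
    · rw [hmin]
      constructor
      · intro h; exact Or.inr h
      · rintro (hC | h)
        · exact eq_of_le_ge hA' hC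
        · exact h
  · -- Case 2: eventually y < x
    have hB : ∀ᶠ x in (u : Filter X), ∀ᶠ y in (v : Filter X), y < x := by
      filter_upwards [hAc] with x hx
      have h2 : {y | x ≤ y}ᶜ ∈ v := Ultrafilter.compl_mem_iff_notMem.mpr hx
      filter_upwards [h2] with y hy
      exact not_le.mp hy
    have hmin : opExt min u v = v :=
      opExt_eq_right_of_ev (fun x y h => min_eq_right h.le) hB
    have hmax : opExt max u v = u :=
      opExt_eq_left_of_ev (fun x y h => max_eq_left h.le) hB
    have hnle : ¬ relExt (· ≤ ·) u v := by
      intro h1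
      have h1' : ∀ᶠ x in (u : Filter X), ∀ᶠ y in (v : Filter X), x ≤ y := h1
      obtain ⟨x, hx1, hx2⟩ := (h1'.and hB).exists
      obtain ⟨y, hy1, hy2⟩ := (hx1.and hx2).exists
      exact absurd hy1 (not_le.mpr hy2)
    have hge : relExt (· ≥ ·) u v := by
      show ∀ᶠ x in (u : Filter X), ∀ᶠ y in (v : Filter X), x ≥ y
      filter_upwards [hB] with x hx
      filter_upwards [hx] with y hy
      exact hy.le
    refine ⟨⟨?_, ?_⟩, ⟨by simp [hmin, hmax], ⟨fun _ => Or.inl hge, fun _ => hmin⟩⟩⟩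
    · rw [hmin, hmax]; exact eq_comm
    · rw [hmin]
      constructor
      · intro h; exact Or.inr h.symm
      · rintro (h | h)
        · exact absurd h hnle
        · exact h.symm
end

section
/- Let X be a linearly ordered set. The equivalence ≡ is a congruence of the algebra of ultrafilters over X with operations m̃ and M̃: if u ≡ u' and v ≡ v' then m̃(u,v) ≡ m̃(u',v') and M̃(u,v) ≡ M̃(u',v'). Moreover, ≡ coincides with the relation D of the band (ultrafilters, m̃): for all ultrafilters u, v, u ≡ v if and only if (m̃(m̃(u,v), u) = u and m̃(m̃(v,u), v) = v). -/
section Aux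

set_option linter.unusedSectionVars false

variable {X : Type*} [LinearOrder X]

local notation u " ⊑ " v => relExt (· ≤ ·) u v
local notation u " ⊒ " v => relExt (· ≥ ·) u v

lemma uf_mem_opExt {F : X → X → X} {u v : Ultrafilter X} {S : Set X} :
    S ∈ opExt F u v ↔ {x | {y | F x y ∈ S} ∈ v} ∈ u := Iff.rfl

lemma uf_ext {u v : Ultrafilter X} (h : ∀ S : Set X, S ∈ u ↔ S ∈ v) : u = v :=
  Ultrafilter.coe_injective (Filter.ext h)

lemma uf_not_le_aux {u v : Ultrafilter X} (h : ¬ (u ⊑ v)) :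
    {x : X | {y : X | y < x} ∈ v} ∈ u := by
  have h' : {x : X | {y : X | x ≤ y} ∈ v}ᶜ ∈ u :=
    (Ultrafilter.compl_mem_iff_notMem).2 h
  refine Filter.mem_of_superset h' ?_
  intro x hx
  have hx' : {y : X | x ≤ y} ∉ v := hx
  have := (Ultrafilter.compl_mem_iff_notMem).2 hx'
  refine Filter.mem_of_superset this ?_
  intro y hy
  exact lt_of_not_ge hy

lemma uf_not_le_ge {u v : Ultrafilter X} (h : ¬ (u ⊑ v)) : u ⊒ v := by
  refine Filter.mem_of_superset (uf_not_le_aux h) ?_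
  intro x hx
  exact Filter.mem_of_superset hx fun y hy => le_of_lt hy

/-- If `v ⊑ u` and `v ⊒ u` then `u = v` (both principal at the same point). -/
lemma uf_le_ge_eq {u v : Ultrafilter X} (h1 : v ⊑ u) (h2 : v ⊒ u) : u = v := by
  have hmem : {x : X | {y : X | x ≤ y} ∈ u} ∩ {x : X | {y : X | x ≥ y} ∈ u} ∈ v :=
    Filter.inter_mem h1 h2
  obtain ⟨x₀, hx₀⟩ := Ultrafilter.nonempty_of_mem hmem
  have hsing : {x₀} ∈ u := by
    have hint := Filter.inter_mem hx₀.1 hx₀.2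
    refine Filter.mem_of_superset hint ?_
    intro y hy
    exact le_antisymm hy.2 hy.1
  have hu : ∀ S : Set X, S ∈ u ↔ x₀ ∈ S := by
    intro S
    constructor
    · intro hS
      by_contra hx
      obtain ⟨z, hz⟩ := Ultrafilter.nonempty_of_mem (Filter.inter_mem hS hsing)
      rcases hz.2 with rfl
      exact hx hz.1
    · intro hx
      exact Filter.mem_of_superset hsing (by intro z hz; rcases hz with rfl; exact hx)
  have hv : {x₀} ∈ v := by
    refine Filter.mem_of_superset hmem ?_
    rintro x ⟨hx1, hx2⟩
    have h1' : x ≤ x₀ := (hu _).1 hx1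
    have h2' : x₀ ≤ x := (hu _).1 hx2
    exact le_antisymm h1' h2'
  have hv' : ∀ S : Set X, S ∈ v ↔ x₀ ∈ S := by
    intro S
    constructor
    · intro hS
      by_contra hx
      obtain ⟨z, hz⟩ := Ultrafilter.nonempty_of_mem (Filter.inter_mem hS hv)
      rcases hz.2 with rfl
      exact hx hz.1
    · intro hx
      exact Filter.mem_of_superset hv (by intro z hz; rcases hz with rfl; exact hx)
  exact uf_ext fun S => (hu S).trans (hv' S).symm

/-- If `u ⊑ v` then `m̃(u,v) = u`. -/
lemma uf_min_left {u v : Ultrafilter X} (h : u ⊑ v) : opExt min u v = u := by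
  refine uf_ext fun S => ?_
  rw [uf_mem_opExt]
  constructor
  · intro hS
    have hint : {x | {y | min x y ∈ S} ∈ v} ∩ {x : X | {y : X | x ≤ y} ∈ v} ∈ u :=
      Filter.inter_mem hS h
    refine Filter.mem_of_superset hint ?_
    rintro x ⟨hx1, hx2⟩
    by_contra hxS
    obtain ⟨y, hy⟩ := Ultrafilter.nonempty_of_mem (Filter.inter_mem hx1 hx2)
    have hm : min x y = x := min_eq_left hy.2
    exact hxS (hm ▸ hy.1)
  · intro hS
    have hint : S ∩ {x : X | {y : X | x ≤ y} ∈ v} ∈ u := Filter.inter_mem hS h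
    refine Filter.mem_of_superset hint ?_
    rintro x ⟨hx1, hx2⟩
    refine Filter.mem_of_superset hx2 ?_
    intro y hy
    simpa [min_eq_left hy] using hx1

/-- If `¬ u ⊑ v` then `m̃(u,v) = v`. -/
lemma uf_min_right {u v : Ultrafilter X} (h : ¬ (u ⊑ v)) : opExt min u v = v := by
  have h' := uf_not_le_aux h
  refine uf_ext fun S => ?_
  rw [uf_mem_opExt]
  constructor
  · intro hS
    obtain ⟨x, hx⟩ := Ultrafilter.nonempty_of_mem (Filter.inter_mem hS h')
    refine Filter.mem_of_superset (Filter.inter_mem hx.1 hx.2) ?_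
    rintro y ⟨hy1, hy2⟩
    simpa [min_eq_right hy2.le] using hy1
  · intro hS
    refine Filter.mem_of_superset h' ?_
    intro x hx
    refine Filter.mem_of_superset (Filter.inter_mem hS hx) ?_
    rintro y ⟨hy1, hy2⟩
    simpa [min_eq_right hy2.le] using hy1

/-- If `u ⊑ v` then `M̃(u,v) = v`. -/
lemma uf_max_right {u v : Ultrafilter X} (h : u ⊑ v) : opExt max u v = v := by
  refine uf_ext fun S => ?_
  rw [uf_mem_opExt]
  constructor
  · intro hS
    obtain ⟨x, hx⟩ := Ultrafilter.nonempty_of_mem (Filter.inter_mem hS h)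
    refine Filter.mem_of_superset (Filter.inter_mem hx.1 hx.2) ?_
    rintro y ⟨hy1, hy2⟩
    simpa [max_eq_right hy2] using hy1
  · intro hS
    refine Filter.mem_of_superset h ?_
    intro x hx
    refine Filter.mem_of_superset (Filter.inter_mem hS hx) ?_
    rintro y ⟨hy1, hy2⟩
    simpa [max_eq_right hy2] using hy1

/-- If `¬ u ⊑ v` then `M̃(u,v) = u`. -/
lemma uf_max_left {u v : Ultrafilter X} (h : ¬ (u ⊑ v)) : opExt max u v = u := by
  have h' := uf_not_le_aux h
  refine uf_ext fun S => ?_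
  rw [uf_mem_opExt]
  constructor
  · intro hS
    refine Filter.mem_of_superset (Filter.inter_mem hS h') ?_
    rintro x ⟨hx1, hx2⟩
    by_contra hxS
    obtain ⟨y, hy⟩ := Ultrafilter.nonempty_of_mem (Filter.inter_mem hx1 hx2)
    have hm : max x y = x := max_eq_left hy.2.le
    exact hxS (hm ▸ hy.1)
  · intro hS
    refine Filter.mem_of_superset (Filter.inter_mem hS h') ?_
    rintro x ⟨hx1, hx2⟩
    refine Filter.mem_of_superset hx2 ?_
    intro y hy
    simpa [max_eq_left hy.le] using hx1

lemma uf_trans_le_le {u v w : Ultrafilter X} (h1 : u ⊑ v) (h2 : v ⊑ w) : u ⊑ w := by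
  refine Filter.mem_of_superset h1 ?_
  intro x hx
  obtain ⟨y, hy⟩ := Ultrafilter.nonempty_of_mem (Filter.inter_mem hx h2)
  refine Filter.mem_of_superset hy.2 ?_
  intro z hz
  exact le_trans hy.1 hz

lemma uf_trans_le_ge {u v w : Ultrafilter X} (h1 : u ⊑ v) (h2 : w ⊒ v) : u ⊑ w := by
  refine Filter.mem_of_superset h1 ?_
  intro x hx
  refine Filter.mem_of_superset h2 ?_
  intro z hz
  obtain ⟨y, hy⟩ := Ultrafilter.nonempty_of_mem (Filter.inter_mem hx hz)
  exact le_trans hy.1 hy.2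

lemma uf_trans_ge_le {u v w : Ultrafilter X} (h1 : v ⊒ u) (h2 : v ⊑ w) : u ⊑ w := by
  obtain ⟨y, hy⟩ := Ultrafilter.nonempty_of_mem (Filter.inter_mem h1 h2)
  refine Filter.mem_of_superset hy.1 ?_
  intro x hx
  refine Filter.mem_of_superset hy.2 ?_
  intro z hz
  exact le_trans hx hz

lemma uf_trans_ge_ge {u v w : Ultrafilter X} (h1 : v ⊒ u) (h2 : w ⊒ v) : w ⊒ u := by
  refine Filter.mem_of_superset h2 ?_
  intro z hz
  obtain ⟨y, hy⟩ := Ultrafilter.nonempty_of_mem (Filter.inter_mem hz h1)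
  refine Filter.mem_of_superset hy.2 ?_
  intro x hx
  exact le_trans hx hy.1

/-- The preorder `⊴`. -/
def sqle (u v : Ultrafilter X) : Prop := (u ⊑ v) ∨ (v ⊒ u)

lemma sqle_trans {u v w : Ultrafilter X} (h1 : sqle u v) (h2 : sqle v w) : sqle u w := by
  rcases h1 with h1 | h1 <;> rcases h2 with h2 | h2
  · exact Or.inl (uf_trans_le_le h1 h2)
  · exact Or.inl (uf_trans_le_ge h1 h2)
  · exact Or.inl (uf_trans_ge_le h1 h2)
  · exact Or.inr (uf_trans_ge_ge h1 h2)

lemma sqle_of_not_le {u v : Ultrafilter X} (h : ¬ (u ⊑ v)) : sqle v u :=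
  Or.inr (uf_not_le_ge h)

lemma uf_min_self (u : Ultrafilter X) : opExt min u u = u := by
  by_cases h : u ⊑ u
  · exact uf_min_left h
  · exact uf_min_right h

end Aux

/-- `≡` is a congruence of `(βX, m̃, M̃)` and coincides with the relation `D`
of the band `(βX, m̃)`. -/
theorem stmt19 {X : Type*} [LinearOrder X] :
    (∀ u u' v v' : Ultrafilter X,
      ((relExt (· ≤ ·) u u' ∨ relExt (· ≥ ·) u' u) ∧
       (relExt (· ≤ ·) u' u ∨ relExt (· ≥ ·) u u')) →
      ((relExt (· ≤ ·) v v' ∨ relExt (· ≥ ·) v' v) ∧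
       (relExt (· ≤ ·) v' v ∨ relExt (· ≥ ·) v v')) →
      (((relExt (· ≤ ·) (opExt min u v) (opExt min u' v') ∨
         relExt (· ≥ ·) (opExt min u' v') (opExt min u v)) ∧
        (relExt (· ≤ ·) (opExt min u' v') (opExt min u v) ∨
         relExt (· ≥ ·) (opExt min u v) (opExt min u' v'))) ∧
       ((relExt (· ≤ ·) (opExt max u v) (opExt max u' v') ∨
         relExt (· ≥ ·) (opExt max u' v') (opExt max u v)) ∧
        (relExt (· ≤ ·) (opExt max u' v') (opExt max u v) ∨
         relExt (· ≥ ·) (opExt max u v) (opExt max u' v'))))) ∧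
    (∀ u v : Ultrafilter X,
      (((relExt (· ≤ ·) u v ∨ relExt (· ≥ ·) v u) ∧
        (relExt (· ≤ ·) v u ∨ relExt (· ≥ ·) u v)) ↔
       (opExt min (opExt min u v) u = u ∧ opExt min (opExt min v u) v = v))) := by
  constructor
  · intro u u' v v' hu hv
    have hu1 : sqle u u' := hu.1
    have hu2 : sqle u' u := hu.2
    have hv1 : sqle v v' := hv.1
    have hv2 : sqle v' v := hv.2
    constructor
    · by_cases h : relExt (· ≤ ·) u v <;> by_cases h' : relExt (· ≤ ·) u' v'
      · rw [uf_min_left h, uf_min_left h']; exact hu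
      · rw [uf_min_left h, uf_min_right h']
        exact ⟨sqle_trans (Or.inl h) hv1, sqle_trans (sqle_of_not_le h') hu2⟩
      · rw [uf_min_right h, uf_min_left h']
        exact ⟨sqle_trans (sqle_of_not_le h) hu1, sqle_trans (Or.inl h') hv2⟩
      · rw [uf_min_right h, uf_min_right h']; exact hv
    · by_cases h : relExt (· ≤ ·) u v <;> by_cases h' : relExt (· ≤ ·) u' v'
      · rw [uf_max_right h, uf_max_right h']; exact hv
      · rw [uf_max_right h, uf_max_left h']
        exact ⟨sqle_trans hv1 (sqle_of_not_le h'), sqle_trans hu2 (Or.inl h)⟩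
      · rw [uf_max_left h, uf_max_right h']
        exact ⟨sqle_trans hu1 (Or.inl h'), sqle_trans hv2 (sqle_of_not_le h)⟩
      · rw [uf_max_left h, uf_max_left h']; exact hu
  · intro u v
    constructor
    · rintro ⟨h1, h2⟩
      constructor
      · by_cases h : relExt (· ≤ ·) u v
        · rw [uf_min_left h, uf_min_self]
        · rw [uf_min_right h]
          by_cases h' : relExt (· ≤ ·) v u
          · have hge : relExt (· ≥ ·) v u := h1.resolve_left h
            have heq : u = v := uf_le_ge_eq h' hge
            rw [uf_min_left h']; exact heq.symm
          · exact uf_min_right h'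
      · by_cases h : relExt (· ≤ ·) v u
        · rw [uf_min_left h, uf_min_self]
        · rw [uf_min_right h]
          by_cases h' : relExt (· ≤ ·) u v
          · have hge : relExt (· ≥ ·) u v := h2.resolve_left h
            have heq : v = u := uf_le_ge_eq h' hge
            rw [uf_min_left h']; exact heq.symm
          · exact uf_min_right h'
    · rintro ⟨h1, h2⟩
      constructor
      · by_cases h : relExt (· ≤ ·) u v
        · exact Or.inl h
        · rw [uf_min_right h] at h1
          by_cases h' : relExt (· ≤ ·) v u
          · rw [uf_min_left h'] at h1
            subst h1
            exact Or.inl h'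
          · exact Or.inr (uf_not_le_ge h')
      · by_cases h : relExt (· ≤ ·) v u
        · exact Or.inl h
        · rw [uf_min_right h] at h2
          by_cases h' : relExt (· ≤ ·) u v
          · rw [uf_min_left h'] at h2
            subst h2
            exact Or.inl h'
          · exact Or.inr (uf_not_le_ge h')
end
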